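/- arXiv:1005.1860 — 5 statements merged into one kernel-verified Lean document; each statement's English description precedes it below -/
import Mathlib

section
/- Let ε ≥ 0 and let v* : S → ℝ be a fixed point of B (B v* = v*). If v : S → ℝ is ε-transitive-feasible (i.e., v s ≥ (B v) s − ε for all s), then v s ≥ v* s − ε/(1−γ) for all s ∈ S. -/
/-!
The Bellman operator is monotone and a `γ`-contraction from above: if `w ≤ v + M` pointwise then
`B w ≤ B v + γ M`. Let `M` be the largest gap `v* s - v s`, attained at some state. There
`v* = B v*` and `B v ≤ v + ε` give `M ≤ γ M + ε`, i.e. `M ≤ ε / (1 - γ)`.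
-/

open Finset

noncomputable def bellman {S A : Type*} [Fintype S] [Fintype A] [Nonempty A]
    (P : A → S → S → ℝ) (r : A → S → ℝ) (γ : ℝ) (v : S → ℝ) (s : S) : ℝ :=
  univ.sup' univ_nonempty (fun a => r a s + γ * ∑ s', P a s s' * v s')

lemma Finset.sup'_sub_sup'_le {ι : Type*} {t : Finset ι} (ht : t.Nonempty) {f g : ι → ℝ} {c : ℝ}
    (hfg : ∀ i ∈ t, f i - g i ≤ c) : t.sup' ht f - t.sup' ht g ≤ c := by
  have hf : t.sup' ht f ≤ t.sup' ht g + c := Finset.sup'_le ht f fun i hi => by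
    linarith [hfg i hi, Finset.le_sup' g hi]
  linarith

lemma sum_mul_le_of_sum_eq_one {ι : Type*} [Fintype ι] {p f : ι → ℝ} {M : ℝ}
    (hp0 : ∀ i, 0 ≤ p i) (hp1 : ∑ i, p i = 1) (hf : ∀ i, f i ≤ M) : ∑ i, p i * f i ≤ M :=
  calc ∑ i, p i * f i ≤ ∑ i, p i * M := sum_le_sum fun i _ => mul_le_mul_of_nonneg_left (hf i) (hp0 i)
    _ = M := by rw [← sum_mul, hp1, one_mul]

lemma bellman_sub_bellman_le {S A : Type*} [Fintype S] [Fintype A] [Nonempty A]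
    {P : A → S → S → ℝ} (r : A → S → ℝ) {γ : ℝ}
    (hP0 : ∀ a s s', 0 ≤ P a s s') (hP1 : ∀ a s, ∑ s', P a s s' = 1) (hγ0 : 0 ≤ γ)
    {v w : S → ℝ} {M : ℝ} (hM : ∀ s, w s - v s ≤ M) (s : S) :
    bellman P r γ w s - bellman P r γ v s ≤ γ * M := by
  refine Finset.sup'_sub_sup'_le _ fun a _ => ?_
  calc r a s + γ * ∑ s', P a s s' * w s' - (r a s + γ * ∑ s', P a s s' * v s')
      = γ * ∑ s', P a s s' * (w s' - v s') := by simp only [mul_sub, sum_sub_distrib]; ring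
    _ ≤ γ * M := mul_le_mul_of_nonneg_left (sum_mul_le_of_sum_eq_one (hP0 a s) (hP1 a s) hM) hγ0

lemma le_div_of_forall_le_mul_add {S : Type*} [Finite S] {f : S → ℝ} {γ ε : ℝ} (hγ1 : γ < 1)
    (h : ∀ M, (∀ s, f s ≤ M) → ∀ s, f s ≤ γ * M + ε) (s : S) : f s ≤ ε / (1 - γ) := by
  have : Nonempty S := ⟨s⟩
  obtain ⟨s₀, hs₀⟩ := Finite.exists_max f
  have hself : f s₀ ≤ γ * f s₀ + ε := h (f s₀) hs₀ s₀
  calc f s ≤ f s₀ := hs₀ s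
    _ ≤ ε / (1 - γ) := by rw [le_div_iff₀ (by linarith)]; linarith

theorem transitive_feasible_upper_bound_general
    {S A : Type*} [Fintype S] [Fintype A] [Nonempty A]
    (P : A → S → S → ℝ) (r : A → S → ℝ) (γ : ℝ)
    (hP0 : ∀ a s s', 0 ≤ P a s s') (hP1 : ∀ a s, ∑ s', P a s s' = 1)
    (hγ0 : 0 ≤ γ) (hγ1 : γ < 1)
    (B : (S → ℝ) → S → ℝ)
    (hB : ∀ v s, B v s =
      Finset.univ.sup' Finset.univ_nonempty
        (fun a => r a s + γ * ∑ s', P a s s' * v s'))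
    (ε : ℝ)
    (vstar : S → ℝ) (hfix : B vstar = vstar)
    (v : S → ℝ) (hv : ∀ s, v s ≥ B v s - ε) :
    ∀ s, v s ≥ vstar s - ε / (1 - γ) := by
  have hB' : B = bellman P r γ := funext fun v => funext (hB v)
  subst hB'
  intro s
  have hgap : vstar s - v s ≤ ε / (1 - γ) :=
    le_div_of_forall_le_mul_add (f := fun s => vstar s - v s) hγ1 (fun M hM s => by
      have hcontr := bellman_sub_bellman_le r hP0 hP1 hγ0 hM s
      rw [hfix] at hcontr
      linarith [hv s]) s
  linarith

theorem transitive_feasible_upper_bound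
    {S A : Type*} [Fintype S] [Nonempty S] [Fintype A] [Nonempty A]
    (P : A → S → S → ℝ) (r : A → S → ℝ) (γ : ℝ)
    (hP0 : ∀ a s s', 0 ≤ P a s s') (hP1 : ∀ a s, ∑ s', P a s s' = 1)
    (hγ0 : 0 ≤ γ) (hγ1 : γ < 1)
    (B : (S → ℝ) → S → ℝ)
    (hB : ∀ v s, B v s =
      Finset.univ.sup' Finset.univ_nonempty
        (fun a => r a s + γ * ∑ s', P a s s' * v s'))
    (ε : ℝ) (hε : 0 ≤ ε)
    (vstar : S → ℝ) (hfix : B vstar = vstar)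
    (v : S → ℝ) (hv : ∀ s, v s ≥ B v s - ε) :
    ∀ s, v s ≥ vstar s - ε / (1 - γ) :=
  transitive_feasible_upper_bound_general P r γ hP0 hP1 hγ0 hγ1 B hB ε vstar hfix v hv
end

section
/- Let v* : S → ℝ be a fixed point of B and let R be a constant-closed set of functions S → ℝ. If there exists v ∈ R with ‖v − v*‖_∞ ≤ ε (i.e., |v s − v* s| ≤ ε for all s), then there exists v' ∈ R that is transitive-feasible and satisfies ‖v' − v*‖_∞ ≤ 2ε/(1−γ). -/
/-!
Shift an ε-approximation `v ∈ R` of `v*` up by `k = (1 + γ) ε / (1 - γ)`. Since `B` is monotone,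
`B v ≤ B v* + γ ε = v* + γ ε ≤ v + (1 + γ) ε`, and a constant shift `k` raises `B v` by only `γ k`;
the choice of `k` solves `(1 + γ) ε + γ k = k`, so `v + k` is transitive-feasible, and it stays
within `ε + k = 2 ε / (1 - γ)` of `v*`.
-/

open Finset

namespace MDP

variable {S A : Type*} [Fintype S] [Fintype A] [Nonempty A]

noncomputable def bellman (P : A → S → S → ℝ) (r : A → S → ℝ) (γ : ℝ) (v : S → ℝ) (s : S) : ℝ :=
  univ.sup' univ_nonempty fun a => r a s + γ * ∑ s', P a s s' * v s'

variable {P : A → S → S → ℝ} {r : A → S → ℝ} {γ : ℝ}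

theorem bellman_mono (hP0 : ∀ a s s', 0 ≤ P a s s') (hγ0 : 0 ≤ γ) {v w : S → ℝ}
    (hvw : ∀ s, v s ≤ w s) (s : S) : bellman P r γ v s ≤ bellman P r γ w s :=
  sup'_mono_fun fun a _ => by
    gcongr with s' _
    · exact hP0 a s s'
    · exact hvw s'

theorem bellman_add_const (hP1 : ∀ a s, ∑ s', P a s s' = 1) (v : S → ℝ) (k : ℝ) (s : S) :
    bellman P r γ (fun s => v s + k) s = bellman P r γ v s + γ * k := by
  have hsum : ∀ a, ∑ s', P a s s' * (v s' + k) = ∑ s', P a s s' * v s' + k := fun a => by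
    simp only [mul_add, sum_add_distrib, ← sum_mul, hP1, one_mul]
  simp only [bellman, hsum, sup'_add]
  simp only [mul_add, add_assoc]

theorem bellman_le_add_of_le_add (hP0 : ∀ a s s', 0 ≤ P a s s')
    (hP1 : ∀ a s, ∑ s', P a s s' = 1) (hγ0 : 0 ≤ γ) {v w : S → ℝ} {c : ℝ}
    (hvw : ∀ s, v s ≤ w s + c) (s : S) :
    bellman P r γ v s ≤ bellman P r γ w s + γ * c :=
  bellman_add_const hP1 w c s ▸ bellman_mono hP0 hγ0 hvw s

theorem bellman_add_const_le_of_abs_sub_le (hP0 : ∀ a s s', 0 ≤ P a s s')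
    (hP1 : ∀ a s, ∑ s', P a s s' = 1) (hγ0 : 0 ≤ γ) (hγ1 : γ < 1)
    {v vstar : S → ℝ} (hfix : bellman P r γ vstar = vstar) {ε : ℝ}
    (hv : ∀ s, |v s - vstar s| ≤ ε) (s : S) :
    bellman P r γ (fun s => v s + (1 + γ) * ε / (1 - γ)) s ≤ v s + (1 + γ) * ε / (1 - γ) := by
  set k := (1 + γ) * ε / (1 - γ)
  have hk : (1 + γ) * ε + γ * k = k := by
    simp only [k]
    field_simp [(sub_pos.2 hγ1).ne']
    ring
  have hBv : bellman P r γ v s ≤ vstar s + γ * ε := by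
    have := bellman_le_add_of_le_add (r := r) hP0 hP1 hγ0
      (fun s => sub_le_iff_le_add'.1 (abs_sub_le_iff.1 (hv s)).1) s
    rwa [hfix] at this
  have hvstar : vstar s ≤ v s + ε := sub_le_iff_le_add'.1 (abs_sub_le_iff.1 (hv s)).2
  rw [bellman_add_const hP1]
  linarith

end MDP

theorem exists_transitive_feasible_close_general
    {S A : Type*} [Fintype S] [Fintype A] [Nonempty A]
    (P : A → S → S → ℝ) (r : A → S → ℝ) (γ : ℝ)
    (hP0 : ∀ a s s', 0 ≤ P a s s') (hP1 : ∀ a s, ∑ s', P a s s' = 1)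
    (hγ0 : 0 ≤ γ) (hγ1 : γ < 1)
    (B : (S → ℝ) → S → ℝ)
    (hB : ∀ v s, B v s =
      Finset.univ.sup' Finset.univ_nonempty
        (fun a => r a s + γ * ∑ s', P a s s' * v s'))
    (vstar : S → ℝ) (hfix : B vstar = vstar)
    (R : Set (S → ℝ))
    (hR : ∀ u ∈ R, ∀ k : ℝ, (fun s => u s + k) ∈ R)
    (ε : ℝ)
    (hex : ∃ v ∈ R, ∀ s, |v s - vstar s| ≤ ε) :
    ∃ v' ∈ R, (∀ s, v' s ≥ B v' s) ∧ (∀ s, |v' s - vstar s| ≤ 2 * ε / (1 - γ)) := by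
  obtain ⟨v, hvR, hv⟩ := hex
  have hBeq : B = MDP.bellman P r γ := funext fun v => funext (hB v)
  subst hBeq
  refine ⟨_, hR v hvR ((1 + γ) * ε / (1 - γ)),
    MDP.bellman_add_const_le_of_abs_sub_le hP0 hP1 hγ0 hγ1 hfix hv, fun s => ?_⟩
  have hε : 0 ≤ ε := (abs_nonneg _).trans (hv s)
  have hk : 0 ≤ (1 + γ) * ε / (1 - γ) := div_nonneg (by positivity) (sub_pos.2 hγ1).le
  have hsum : ε + (1 + γ) * ε / (1 - γ) = 2 * ε / (1 - γ) := by
    field_simp [(sub_pos.2 hγ1).ne']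
    ring
  calc |v s + (1 + γ) * ε / (1 - γ) - vstar s|
      ≤ |v s - vstar s| + |(1 + γ) * ε / (1 - γ)| := by
        rw [add_sub_right_comm]; exact abs_add_le _ _
    _ ≤ 2 * ε / (1 - γ) := by rw [abs_of_nonneg hk, ← hsum]; gcongr; exact hv s

theorem exists_transitive_feasible_close
    {S A : Type*} [Fintype S] [Nonempty S] [Fintype A] [Nonempty A]
    (P : A → S → S → ℝ) (r : A → S → ℝ) (γ : ℝ)
    (hP0 : ∀ a s s', 0 ≤ P a s s') (hP1 : ∀ a s, ∑ s', P a s s' = 1)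
    (hγ0 : 0 ≤ γ) (hγ1 : γ < 1)
    (B : (S → ℝ) → S → ℝ)
    (hB : ∀ v s, B v s =
      Finset.univ.sup' Finset.univ_nonempty
        (fun a => r a s + γ * ∑ s', P a s s' * v s'))
    (vstar : S → ℝ) (hfix : B vstar = vstar)
    (R : Set (S → ℝ))
    (hR : ∀ u ∈ R, ∀ k : ℝ, (fun s => u s + k) ∈ R)
    (ε : ℝ)
    (hex : ∃ v ∈ R, ∀ s, |v s - vstar s| ≤ ε) :
    ∃ v' ∈ R, (∀ s, v' s ≥ B v' s) ∧ (∀ s, |v' s - vstar s| ≤ 2 * ε / (1 - γ)) :=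
  exists_transitive_feasible_close_general P r γ hP0 hP1 hγ0 hγ1 B hB vstar hfix R hR ε hex
end

section
/- (Online error bound.) Let v* : S → ℝ be a fixed point of B, let ρ and ρ̄ be distributions on S, and ε_s, ε_p, ε_c ≥ 0. Let v : S → ℝ be (ε_s + ε_p)-transitive-feasible and satisfy |ρᵀv − ρ̄ᵀv| ≤ ε_c. Then ‖v* − v‖_{1,ρ} ≤ ρ̄ᵀv − ρᵀv* + ε_c + 2(ε_s + ε_p)/(1−γ). -/
/-!
Let `d := v* - v`. At a state where `d` is maximal, compare `v*` with `v` along the action that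
is greedy for `v*`: the fixed-point equation and `ε`-transitive-feasibility give
`max d ≤ γ · max d + ε`, so `v* - v ≤ ε / (1 - γ)` everywhere. A real `x ≤ c` with `0 ≤ c`
satisfies `|x| ≤ -x + 2c`; averaging against `ρ` and replacing `ρᵀv` by `ρ̄ᵀv + ε_c` gives the bound.
-/

open Finset

theorem le_div_one_sub_of_le_discounted_avg {S : Type*} [Fintype S]
    (K : S → S → ℝ) (hK0 : ∀ s s', 0 ≤ K s s') (hK1 : ∀ s, ∑ s', K s s' = 1)
    {γ : ℝ} (hγ0 : 0 ≤ γ) (hγ1 : γ < 1) (d : S → ℝ) (ε : ℝ)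
    (hd : ∀ s, d s ≤ γ * ∑ s', K s s' * d s' + ε) (s : S) :
    d s ≤ ε / (1 - γ) := by
  have : Nonempty S := ⟨s⟩
  obtain ⟨s₀, hs₀⟩ := Finite.exists_max d
  have havg : ∑ s', K s₀ s' * d s' ≤ d s₀ :=
    calc ∑ s', K s₀ s' * d s' ≤ ∑ s', K s₀ s' * d s₀ :=
          sum_le_sum fun s' _ => mul_le_mul_of_nonneg_left (hs₀ s') (hK0 s₀ s')
      _ = d s₀ := by rw [← sum_mul, hK1, one_mul]
  have hmax : d s₀ * (1 - γ) ≤ ε := by nlinarith [hd s₀]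
  exact (hs₀ s).trans ((le_div_iff₀ (sub_pos.2 hγ1)).2 hmax)

theorem exists_policy_sub_le_discounted_avg {S A : Type*} [Fintype S] [Fintype A] [Nonempty A]
    (P : A → S → S → ℝ) (r : A → S → ℝ) (γ : ℝ) (B : (S → ℝ) → S → ℝ)
    (hB : ∀ v s, B v s =
      Finset.univ.sup' Finset.univ_nonempty
        (fun a => r a s + γ * ∑ s', P a s s' * v s'))
    (vstar : S → ℝ) (hfix : B vstar = vstar) (v : S → ℝ) (ε : ℝ) (hv : ∀ s, v s ≥ B v s - ε) :
    ∃ π : S → A, ∀ s,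
      vstar s - v s ≤ γ * ∑ s', P (π s) s s' * (vstar s' - v s') + ε := by
  choose π _ hπ using fun s => exists_mem_eq_sup' (univ_nonempty (α := A))
    (fun a => r a s + γ * ∑ s', P a s s' * vstar s')
  refine ⟨π, fun s => ?_⟩
  have hvstar : vstar s = r (π s) s + γ * ∑ s', P (π s) s s' * vstar s' := by
    rw [← hπ s, ← hB, hfix]
  have hvlow : r (π s) s + γ * ∑ s', P (π s) s s' * v s' - ε ≤ v s := by
    have hQ := le_sup' (fun a => r a s + γ * ∑ s', P a s s' * v s') (mem_univ (π s))
    linarith [hv s, hB v s]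
  simp only [mul_sub, sum_sub_distrib]
  linarith

theorem sum_mul_abs_sub_le {S : Type*} [Fintype S] (ρ : S → ℝ) (hρ0 : ∀ s, ρ s ≥ 0)
    (hρ1 : ∑ s, ρ s = 1) (u w : S → ℝ) {c : ℝ} (hc : 0 ≤ c) (huw : ∀ s, u s - w s ≤ c) :
    ∑ s, ρ s * |u s - w s| ≤ ∑ s, ρ s * w s - ∑ s, ρ s * u s + 2 * c :=
  calc ∑ s, ρ s * |u s - w s| ≤ ∑ s, (ρ s * w s - ρ s * u s + ρ s * (2 * c)) := by
        refine sum_le_sum fun s _ => ?_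
        have : |u s - w s| ≤ w s - u s + 2 * c := abs_le.2 ⟨by linarith, by linarith [huw s]⟩
        nlinarith [hρ0 s]
    _ = ∑ s, ρ s * w s - ∑ s, ρ s * u s + 2 * c := by
        rw [sum_add_distrib, sum_sub_distrib, ← sum_mul, hρ1, one_mul]

theorem online_error_bound_general
    {S A : Type*} [Fintype S] [Fintype A] [Nonempty A]
    (P : A → S → S → ℝ) (r : A → S → ℝ) (γ : ℝ)
    (hP0 : ∀ a s s', 0 ≤ P a s s') (hP1 : ∀ a s, ∑ s', P a s s' = 1)
    (hγ0 : 0 ≤ γ) (hγ1 : γ < 1)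
    (B : (S → ℝ) → S → ℝ)
    (hB : ∀ v s, B v s =
      Finset.univ.sup' Finset.univ_nonempty
        (fun a => r a s + γ * ∑ s', P a s s' * v s'))
    (vstar : S → ℝ) (hfix : B vstar = vstar)
    (ρ ρbar : S → ℝ)
    (hρ0 : ∀ s, ρ s ≥ 0) (hρ1 : ∑ s, ρ s = 1)
    (εs εp εc : ℝ) (hεs : 0 ≤ εs) (hεp : 0 ≤ εp)
    (v : S → ℝ) (hv : ∀ s, v s ≥ B v s - (εs + εp))
    (hvObj : |(∑ s, ρ s * v s) - (∑ s, ρbar s * v s)| ≤ εc) :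
    ∑ s, ρ s * |vstar s - v s| ≤
      (∑ s, ρbar s * v s) - (∑ s, ρ s * vstar s)
        + εc + 2 * (εs + εp) / (1 - γ) := by
  obtain ⟨π, hπ⟩ := exists_policy_sub_le_discounted_avg P r γ B hB vstar hfix v _ hv
  have hgap : ∀ s, vstar s - v s ≤ (εs + εp) / (1 - γ) :=
    le_div_one_sub_of_le_discounted_avg (fun s => P (π s) s) (fun s => hP0 (π s) s)
      (fun s => hP1 (π s) s) hγ0 hγ1 _ _ hπ
  have hc : 0 ≤ (εs + εp) / (1 - γ) := div_nonneg (by positivity) (by linarith)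
  have habs := sum_mul_abs_sub_le ρ hρ0 hρ1 vstar v hc hgap
  rw [mul_div_assoc]
  linarith [(abs_le.1 hvObj).2]

theorem online_error_bound
    {S A : Type*} [Fintype S] [Nonempty S] [Fintype A] [Nonempty A]
    (P : A → S → S → ℝ) (r : A → S → ℝ) (γ : ℝ)
    (hP0 : ∀ a s s', 0 ≤ P a s s') (hP1 : ∀ a s, ∑ s', P a s s' = 1)
    (hγ0 : 0 ≤ γ) (hγ1 : γ < 1)
    (B : (S → ℝ) → S → ℝ)
    (hB : ∀ v s, B v s =
      Finset.univ.sup' Finset.univ_nonempty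
        (fun a => r a s + γ * ∑ s', P a s s' * v s'))
    (vstar : S → ℝ) (hfix : B vstar = vstar)
    (ρ ρbar : S → ℝ)
    (hρ0 : ∀ s, ρ s ≥ 0) (hρ1 : ∑ s, ρ s = 1)
    (hρbar0 : ∀ s, ρbar s ≥ 0) (hρbar1 : ∑ s, ρbar s = 1)
    (εs εp εc : ℝ) (hεs : 0 ≤ εs) (hεp : 0 ≤ εp) (hεc : 0 ≤ εc)
    (v : S → ℝ) (hv : ∀ s, v s ≥ B v s - (εs + εp))
    (hvObj : |(∑ s, ρ s * v s) - (∑ s, ρbar s * v s)| ≤ εc) :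
    ∑ s, ρ s * |vstar s - v s| ≤
      (∑ s, ρbar s * v s) - (∑ s, ρ s * vstar s)
        + εc + 2 * (εs + εp) / (1 - γ) :=
  online_error_bound_general P r γ hP0 hP1 hγ0 hγ1 B hB vstar hfix ρ ρbar hρ0 hρ1 εs εp εc hεs hεp v
    hv hvObj
end

section
/- (Sufficient sampling implies bounded constraint violation.) Let Φ : S → Fin n → ℝ be a feature matrix, w : Fin n → ℝ weights with ∑_i |w i| ≤ ψ, and define v s = ∑_i w i * Φ s i. Let S̄ ⊆ S be a set of sampled states and δ_φ, δ_r, δ_p ≥ 0 such that for every s ∈ S there exists s̄ ∈ S̄ with: (a) |Φ s̄ i − Φ s i| ≤ δ_φ for all i; (b) |r a s̄ − r a s| ≤ δ_r for all a ∈ A; (c) |∑_{s'} P a s̄ s' * Φ s' i − ∑_{s'} P a s s' * Φ s' i| ≤ δ_p for all a ∈ A and all i. If v satisfies the sampled Bellman constraints, i.e., v s̄ ≥ r a s̄ + γ * ∑_{s'} P a s̄ s' * v s' for every s̄ ∈ S̄ and every a ∈ A, then v is ε_p-transitive-feasible with ε_p = δ_r + ψ*(δ_φ + γ*δ_p). 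-/
/-! Fix `s` and a sample `s̄` covering it. Since `v` is linear in the features with `ℓ1`-bounded
weights, `|v s̄ - v s| ≤ ψ δφ`, and (swapping the two sums) the expected next values under `P a s̄`
and `P a s` differ by at most `ψ δp`. So every backup `r a s + γ 𝔼[v]` exceeds the one at `s̄` by at
most `δr + γ ψ δp`, which the sampled constraint bounds by `v s̄ ≤ v s + ψ δφ`. -/

open Finset

section WeightedSums

variable {ι κ : Type*} [Fintype ι] [Fintype κ]

theorem abs_weighted_sum_sub_le {w x y : ι → ℝ} {ψ δ : ℝ}
    (hw : ∑ i, |w i| ≤ ψ) (hδ : 0 ≤ δ) (hxy : ∀ i, |x i - y i| ≤ δ) :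
    |∑ i, w i * x i - ∑ i, w i * y i| ≤ ψ * δ :=
  calc |∑ i, w i * x i - ∑ i, w i * y i|
      = |∑ i, w i * (x i - y i)| := by simp only [mul_sub, sum_sub_distrib]
    _ ≤ ∑ i, |w i| * |x i - y i| := by
        simpa only [abs_mul] using abs_sum_le_sum_abs (fun i => w i * (x i - y i)) univ
    _ ≤ ∑ i, |w i| * δ := by gcongr with i; exact hxy i
    _ = (∑ i, |w i|) * δ := (sum_mul _ _ _).symm
    _ ≤ ψ * δ := by gcongr

theorem sum_mul_weighted_sum_comm (p : κ → ℝ) (w : ι → ℝ) (Φ : κ → ι → ℝ) :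
    ∑ k, p k * ∑ i, w i * Φ k i = ∑ i, w i * ∑ k, p k * Φ k i := by
  simp only [mul_sum]
  rw [sum_comm]
  simp only [mul_left_comm]

end WeightedSums

theorem sufficient_sampling_bounded_violation_general
    {S A : Type*} [Fintype S] [Fintype A] [Nonempty A]
    (P : A → S → S → ℝ) (r : A → S → ℝ) (γ : ℝ)
    (hγ0 : 0 ≤ γ)
    (B : (S → ℝ) → S → ℝ)
    (hB : ∀ v s, B v s =
      Finset.univ.sup' Finset.univ_nonempty
        (fun a => r a s + γ * ∑ s', P a s s' * v s'))
    {n : ℕ} (Φ : S → Fin n → ℝ) (w : Fin n → ℝ) (ψ : ℝ)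
    (hw : ∑ i, |w i| ≤ ψ)
    (v : S → ℝ) (hv : ∀ s, v s = ∑ i, w i * Φ s i)
    (Sbar : Set S) (δφ δr δp : ℝ)
    (hδφ : 0 ≤ δφ) (hδp : 0 ≤ δp)
    (hCover : ∀ s : S, ∃ sbar ∈ Sbar,
      (∀ i, |Φ sbar i - Φ s i| ≤ δφ) ∧
      (∀ a : A, |r a sbar - r a s| ≤ δr) ∧
      (∀ a : A, ∀ i, |(∑ s', P a sbar s' * Φ s' i) - (∑ s', P a s s' * Φ s' i)| ≤ δp))
    (hFeas : ∀ sbar ∈ Sbar, ∀ a : A,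
      v sbar ≥ r a sbar + γ * ∑ s', P a sbar s' * v s') :
    ∀ s, v s ≥ B v s - (δr + ψ * (δφ + γ * δp)) := by
  intro s
  obtain ⟨sb, hsb, hΦ, hr, hPΦ⟩ := hCover s
  have hv_near : |v sb - v s| ≤ ψ * δφ := by
    simpa only [hv] using abs_weighted_sum_sub_le hw hδφ hΦ
  rw [hB, ge_iff_le, sub_le_iff_le_add]
  refine sup'_le _ _ fun a _ => ?_
  have hPv_near : |∑ s', P a sb s' * v s' - ∑ s', P a s s' * v s'| ≤ ψ * δp := by
    simp only [hv]
    rw [sum_mul_weighted_sum_comm (P a sb), sum_mul_weighted_sum_comm (P a s)]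
    exact abs_weighted_sum_sub_le hw hδp (hPΦ a)
  have hγPv := mul_le_mul_of_nonneg_left (abs_le.mp hPv_near).1 hγ0
  linarith [hFeas sb hsb a, (abs_le.mp (hr a)).1, (abs_le.mp hv_near).2]

theorem sufficient_sampling_bounded_violation
    {S A : Type*} [Fintype S] [Nonempty S] [Fintype A] [Nonempty A]
    (P : A → S → S → ℝ) (r : A → S → ℝ) (γ : ℝ)
    (hP0 : ∀ a s s', 0 ≤ P a s s') (hP1 : ∀ a s, ∑ s', P a s s' = 1)
    (hγ0 : 0 ≤ γ) (hγ1 : γ < 1)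
    (B : (S → ℝ) → S → ℝ)
    (hB : ∀ v s, B v s =
      Finset.univ.sup' Finset.univ_nonempty
        (fun a => r a s + γ * ∑ s', P a s s' * v s'))
    {n : ℕ} (Φ : S → Fin n → ℝ) (w : Fin n → ℝ) (ψ : ℝ) (hψ : 0 ≤ ψ)
    (hw : ∑ i, |w i| ≤ ψ)
    (v : S → ℝ) (hv : ∀ s, v s = ∑ i, w i * Φ s i)
    (Sbar : Set S) (δφ δr δp : ℝ)
    (hδφ : 0 ≤ δφ) (hδr : 0 ≤ δr) (hδp : 0 ≤ δp)
    (hCover : ∀ s : S, ∃ sbar ∈ Sbar,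
      (∀ i, |Φ sbar i - Φ s i| ≤ δφ) ∧
      (∀ a : A, |r a sbar - r a s| ≤ δr) ∧
      (∀ a : A, ∀ i, |(∑ s', P a sbar s' * Φ s' i) - (∑ s', P a s s' * Φ s' i)| ≤ δp))
    (hFeas : ∀ sbar ∈ Sbar, ∀ a : A,
      v sbar ≥ r a sbar + γ * ∑ s', P a sbar s' * v s') :
    ∀ s, v s ≥ B v s - (δr + ψ * (δφ + γ * δp)) :=
  sufficient_sampling_bounded_violation_general P r γ hγ0 B hB Φ w ψ hw v hv Sbar δφ δr δp hδφ hδp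
    hCover hFeas
end

section
/- (Lipschitz MDP sampling bound.) Let E be a real normed vector space, k : S → E, and K_r, K_P, K_φ, c, ψ ≥ 0. Let Φ : S → Fin n → ℝ be a feature matrix with ∑_{z∈S} |Φ z i| = 1 for each i, and assume: |r a x − r a y| ≤ K_r * ‖k x − k y‖ for all a, x, y; |P a x z − P a y z| ≤ K_P * ‖k x − k y‖ for all a, x, y, z; |Φ x i − Φ y i| ≤ K_φ * ‖k x − k y‖ for all i, x, y. Let S̄ ⊆ S satisfy the covering condition: for every s ∈ S there exists s̄ ∈ S̄ with ‖k s − k s̄‖ ≤ c. Let w : Fin n → ℝ with ∑_i |w i| ≤ ψ and define v s = ∑_i w i * Φ s i. If v s̄ ≥ r a s̄ + γ * ∑_{s'} P a s̄ s' * v s' for every s̄ ∈ S̄ and every a ∈ A, then v is ε_p-transitive-feasible with ε_p = c*K_r + c*ψ*(K_φ + γ*K_P). -/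
/-!
Fix a state `s` and a sample `s̄ ∈ S̄` with `‖k s - k s̄‖ ≤ c`. For every action `a`, the Bellman
target `r a s + γ * ∑ P a s s' * v s'` exceeds the one at `s̄` by at most `c * Kr` (reward) plus
`γ * c * KP * ∑ |w i|` (transition), because `∑_{s'} |v s'| ≤ ∑ |w i|` when the feature columns
have unit `ℓ¹` norm; and `v s̄` exceeds `v s` by at most `c * Kφ * ∑ |w i|`. Feasibility at `s̄`
then gives `v s ≥ B v s - ε_p`.
-/

open Finset

section WeightedSums

variable {ι : Type*} [Fintype ι]

theorem abs_sum_mul_sub_sum_mul_le (f g w : ι → ℝ) {δ : ℝ} (h : ∀ i, |f i - g i| ≤ δ) :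
    |∑ i, f i * w i - ∑ i, g i * w i| ≤ δ * ∑ i, |w i| := by
  rw [← sum_sub_distrib, mul_sum]
  calc |∑ i, (f i * w i - g i * w i)|
      ≤ ∑ i, |f i * w i - g i * w i| := abs_sum_le_sum_abs _ _
    _ = ∑ i, |f i - g i| * |w i| := by simp only [← sub_mul, abs_mul]
    _ ≤ ∑ i, δ * |w i| := by gcongr with i; exact h i

theorem sum_abs_sum_mul_le {S : Type*} [Fintype S] (w : ι → ℝ) (Φ : S → ι → ℝ) :
    ∑ z, |∑ i, w i * Φ z i| ≤ ∑ i, |w i| * ∑ z, |Φ z i| := by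
  calc ∑ z, |∑ i, w i * Φ z i|
      ≤ ∑ z, ∑ i, |w i| * |Φ z i| := by
        gcongr with z
        exact (abs_sum_le_sum_abs _ _).trans_eq (by simp only [abs_mul])
    _ = ∑ i, |w i| * ∑ z, |Φ z i| := by rw [sum_comm]; simp only [mul_sum]

end WeightedSums

section LipschitzFeatures

variable {S ι E : Type*} [Fintype ι] [SeminormedAddCommGroup E]
  (k : S → E) (Φ : S → ι → ℝ) (w : ι → ℝ) {v : S → ℝ}

theorem abs_sub_le_of_features_lipschitz (hv : ∀ s, v s = ∑ i, w i * Φ s i) {Kφ : ℝ}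
    (hΦLip : ∀ i, ∀ x y : S, |Φ x i - Φ y i| ≤ Kφ * ‖k x - k y‖) (x y : S) :
    |v x - v y| ≤ Kφ * ‖k x - k y‖ * ∑ i, |w i| := by
  simp only [hv, mul_comm (w _)]
  exact abs_sum_mul_sub_sum_mul_le _ _ w (hΦLip · x y)

theorem abs_expected_sub_le_of_transition_lipschitz [Fintype S]
    (hv : ∀ s, v s = ∑ i, w i * Φ s i) (P : S → S → ℝ) {KP : ℝ}
    (hΦnorm : ∀ i, ∑ z, |Φ z i| = 1)
    (hPLip : ∀ x y z : S, |P x z - P y z| ≤ KP * ‖k x - k y‖) (x y : S) :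
    |∑ s', P x s' * v s' - ∑ s', P y s' * v s'| ≤ KP * ‖k x - k y‖ * ∑ i, |w i| := by
  have hKP : 0 ≤ KP * ‖k x - k y‖ := (abs_nonneg _).trans (hPLip x y x)
  have hv_abs : ∑ s', |v s'| ≤ ∑ i, |w i| := by
    simpa only [hv, hΦnorm, mul_one] using sum_abs_sum_mul_le w Φ
  exact (abs_sum_mul_sub_sum_mul_le _ _ v (hPLip x y)).trans
    (mul_le_mul_of_nonneg_left hv_abs hKP)

end LipschitzFeatures

theorem lipschitz_mdp_sampling_bound_general
    {S A : Type*} [Fintype S] [Fintype A] [Nonempty A]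
    {E : Type*} [NormedAddCommGroup E]
    (P : A → S → S → ℝ) (r : A → S → ℝ) (γ : ℝ)
    (hγ0 : 0 ≤ γ)
    (B : (S → ℝ) → S → ℝ)
    (hB : ∀ v s, B v s =
      Finset.univ.sup' Finset.univ_nonempty
        (fun a => r a s + γ * ∑ s', P a s s' * v s'))
    (k : S → E) (Kr KP Kφ c ψ : ℝ)
    (hKr : 0 ≤ Kr) (hKP : 0 ≤ KP) (hKφ : 0 ≤ Kφ)
    {n : ℕ} (Φ : S → Fin n → ℝ)
    (hΦnorm : ∀ i, ∑ z, |Φ z i| = 1)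
    (hrLip : ∀ a : A, ∀ x y : S, |r a x - r a y| ≤ Kr * ‖k x - k y‖)
    (hPLip : ∀ a : A, ∀ x y z : S, |P a x z - P a y z| ≤ KP * ‖k x - k y‖)
    (hΦLip : ∀ i, ∀ x y : S, |Φ x i - Φ y i| ≤ Kφ * ‖k x - k y‖)
    (Sbar : Set S)
    (hCover : ∀ s : S, ∃ sbar ∈ Sbar, ‖k s - k sbar‖ ≤ c)
    (w : Fin n → ℝ) (hw : ∑ i, |w i| ≤ ψ)
    (v : S → ℝ) (hv : ∀ s, v s = ∑ i, w i * Φ s i)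
    (hFeas : ∀ sbar ∈ Sbar, ∀ a : A,
      v sbar ≥ r a sbar + γ * ∑ s', P a sbar s' * v s') :
    ∀ s, v s ≥ B v s - (c * Kr + c * ψ * (Kφ + γ * KP)) := by
  intro s
  obtain ⟨sb, hsb, hdist⟩ := hCover s
  have hw0 : 0 ≤ ∑ i, |w i| := sum_nonneg fun i _ => abs_nonneg (w i)
  have hscale : ∀ {K : ℝ}, 0 ≤ K → K * ‖k s - k sb‖ * ∑ i, |w i| ≤ c * ψ * K := fun hK => by
    rw [mul_assoc, mul_comm]
    exact mul_le_mul_of_nonneg_right (mul_le_mul hdist hw hw0 ((norm_nonneg _).trans hdist)) hK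
  rw [hB, ge_iff_le, sub_le_iff_le_add]
  refine sup'_le _ _ fun a _ => ?_
  have hr := (abs_le.mp ((hrLip a s sb).trans (mul_le_mul_of_nonneg_left hdist hKr))).2
  have hP := (abs_le.mp ((abs_expected_sub_le_of_transition_lipschitz k Φ w hv (P a) hΦnorm
    (hPLip a) s sb).trans (hscale hKP))).2
  have hvs := (abs_le.mp ((abs_sub_le_of_features_lipschitz k Φ w hv hΦLip s sb).trans
    (hscale hKφ))).1
  linarith [hFeas sb hsb a, mul_le_mul_of_nonneg_left hP hγ0]

theorem lipschitz_mdp_sampling_bound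
    {S A : Type*} [Fintype S] [Nonempty S] [Fintype A] [Nonempty A]
    {E : Type*} [NormedAddCommGroup E] [NormedSpace ℝ E]
    (P : A → S → S → ℝ) (r : A → S → ℝ) (γ : ℝ)
    (hP0 : ∀ a s s', 0 ≤ P a s s') (hP1 : ∀ a s, ∑ s', P a s s' = 1)
    (hγ0 : 0 ≤ γ) (hγ1 : γ < 1)
    (B : (S → ℝ) → S → ℝ)
    (hB : ∀ v s, B v s =
      Finset.univ.sup' Finset.univ_nonempty
        (fun a => r a s + γ * ∑ s', P a s s' * v s'))
    (k : S → E) (Kr KP Kφ c ψ : ℝ)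
    (hKr : 0 ≤ Kr) (hKP : 0 ≤ KP) (hKφ : 0 ≤ Kφ) (hc : 0 ≤ c) (hψ : 0 ≤ ψ)
    {n : ℕ} (Φ : S → Fin n → ℝ)
    (hΦnorm : ∀ i, ∑ z, |Φ z i| = 1)
    (hrLip : ∀ a : A, ∀ x y : S, |r a x - r a y| ≤ Kr * ‖k x - k y‖)
    (hPLip : ∀ a : A, ∀ x y z : S, |P a x z - P a y z| ≤ KP * ‖k x - k y‖)
    (hΦLip : ∀ i, ∀ x y : S, |Φ x i - Φ y i| ≤ Kφ * ‖k x - k y‖)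
    (Sbar : Set S)
    (hCover : ∀ s : S, ∃ sbar ∈ Sbar, ‖k s - k sbar‖ ≤ c)
    (w : Fin n → ℝ) (hw : ∑ i, |w i| ≤ ψ)
    (v : S → ℝ) (hv : ∀ s, v s = ∑ i, w i * Φ s i)
    (hFeas : ∀ sbar ∈ Sbar, ∀ a : A,
      v sbar ≥ r a sbar + γ * ∑ s', P a sbar s' * v s') :
    ∀ s, v s ≥ B v s - (c * Kr + c * ψ * (Kφ + γ * KP)) :=
  lipschitz_mdp_sampling_bound_general P r γ hγ0 B hB k Kr KP Kφ c ψ hKr hKP hKφ Φ hΦnorm hrLip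
    hPLip hΦLip Sbar hCover w hw v hv hFeas
end
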